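/- For the 7-dimensional Lie algebra above, α7 ∧ (dα7)^3 is a non-zero multiple of α1∧α2∧α3∧α4∧α5∧α6∧α7; hence α7 is a (linear) contact form. -/

import Mathlib

/-!
Write `dα7 = -(β₁ + β₂ + β₃)` with `β₁ = α1∧α4`, `β₂ = α2∧α3`, `β₃ = α5∧α6`. A decomposable
two-form commutes with every one-form and squares to zero, so the `βᵢ` are pairwise commuting
square-zero elements and `(dα7)³ = -6 β₁β₂β₃`. Moving `α7` and `α4` past two-forms then gives
`α7 ∧ (dα7)³ = -6 α1∧⋯∧α7`, which is non-zero because the wedges of a basis are linearly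
independent in the exterior power.
-/

/-- The dual basis 1-forms `α1,…,α7` of the 7-dimensional Lie algebra, viewed in the
exterior algebra `Λ g*`. -/
noncomputable def a7 (i : Fin 7) : ExteriorAlgebra ℝ (Module.Dual ℝ (Fin 7 → ℝ)) :=
  ExteriorAlgebra.ι ℝ (LinearMap.proj i)

/-- `dα7 = -α1∧α4 - α2∧α3 - α5∧α6`. -/
noncomputable def da7 : ExteriorAlgebra ℝ (Module.Dual ℝ (Fin 7 → ℝ)) :=
  -(a7 0 * a7 3) - a7 1 * a7 2 - a7 4 * a7 5

theorem add_add_pow_three_of_commute_of_mul_self_eq_zero {A : Type*} [Ring A] {x y z : A}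
    (hxy : Commute x y) (hxz : Commute x z) (hyz : Commute y z)
    (hx : x * x = 0) (hy : y * y = 0) (hz : z * z = 0) :
    (x + y + z) ^ 3 = 6 • (x * y * z) := by
  have hsq : (x + y + z) ^ 2 = 2 * (x * y + x * z + y * z) := by
    linear_combination (norm := noncomm_ring) hx + hy + hz - hxy.eq - hxz.eq - hyz.eq
  rw [pow_succ', hsq]
  linear_combination (norm := noncomm_ring)
    2 * (hx * y + hx * z + hy * z + hy * x + hz * x + hz * y + y * hxy.eq - hxy.eq * z
      + z * hxz.eq - hxz.eq * y + z * hyz.eq - x * hyz.eq)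

theorem LinearMap.linearIndependent_proj {K ι : Type*} [Field K] [Fintype ι] [DecidableEq ι] :
    LinearIndependent K (fun i : ι => (LinearMap.proj i : Module.Dual K (ι → K))) := by
  have h : ⇑(Pi.basisFun K ι).dualBasis = fun i => LinearMap.proj i := by
    ext i v
    simp
  exact h ▸ (Pi.basisFun K ι).dualBasis.linearIndependent

namespace ExteriorAlgebra

theorem ιMulti_ne_zero_of_linearIndependent {K E : Type*} [Field K] [AddCommGroup E]
    [Module K E] {n : ℕ} {v : Fin n → E} (hv : LinearIndependent K v) :
    ιMulti K n v ≠ 0 := by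
  have := (exteriorPower.ιMulti_family_linearIndependent_field (n := n) hv).ne_zero
    (Set.powersetCard.ofFinEmbEquiv (OrderIso.refl _).toOrderEmbedding)
  rw [exteriorPower.ιMulti_family, Equiv.symm_apply_apply] at this
  exact fun h => this (Subtype.ext h)

variable {R M : Type*} [CommRing R] [AddCommGroup M] [Module R M]

theorem commute_ι_mul_ι_ι (x y z : M) : Commute (ι R x * ι R y) (ι R z) := by
  have hxz := ι_add_mul_swap (R := R) x z
  have hyz := ι_add_mul_swap (R := R) y z
  unfold Commute SemiconjBy
  linear_combination (norm := noncomm_ring) ι R x * hyz - hxz * ι R y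

theorem commute_ι_mul_ι_ι_mul_ι (x y z w : M) :
    Commute (ι R x * ι R y) (ι R z * ι R w) :=
  (commute_ι_mul_ι_ι x y z).mul_right (commute_ι_mul_ι_ι x y w)

theorem ι_mul_ι_mul_self (x y : M) : ι R x * ι R y * (ι R x * ι R y) = 0 := by
  rw [← mul_assoc, (commute_ι_mul_ι_ι x y x).eq, ← mul_assoc, ι_sq_zero, zero_mul, zero_mul]

end ExteriorAlgebra

open ExteriorAlgebra

theorem a7_prod_ne_zero : a7 0 * a7 1 * a7 2 * a7 3 * a7 4 * a7 5 * a7 6 ≠ 0 := by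
  have h := ιMulti_ne_zero_of_linearIndependent
    (LinearMap.linearIndependent_proj (K := ℝ) (ι := Fin 7))
  simpa [ιMulti_apply, List.ofFn_succ, Matrix.vecTail, a7, mul_assoc] using h

theorem da7_pow_three :
    da7 ^ 3 = -(6 • (a7 0 * a7 3 * (a7 1 * a7 2) * (a7 4 * a7 5))) := by
  have hda7 : da7 = -(a7 0 * a7 3 + a7 1 * a7 2 + a7 4 * a7 5) := by
    rw [da7]
    abel
  rw [hda7, Odd.neg_pow (by decide)]
  congr 1
  exact add_add_pow_three_of_commute_of_mul_self_eq_zero (commute_ι_mul_ι_ι_mul_ι _ _ _ _)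
    (commute_ι_mul_ι_ι_mul_ι _ _ _ _) (commute_ι_mul_ι_ι_mul_ι _ _ _ _)
    (ι_mul_ι_mul_self _ _) (ι_mul_ι_mul_self _ _) (ι_mul_ι_mul_self _ _)

theorem a7_six_mul_pairs_eq_prod :
    a7 6 * (a7 0 * a7 3 * (a7 1 * a7 2) * (a7 4 * a7 5))
      = a7 0 * a7 1 * a7 2 * a7 3 * a7 4 * a7 5 * a7 6 := by
  have h6 : Commute (a7 0 * a7 3 * (a7 1 * a7 2) * (a7 4 * a7 5)) (a7 6) :=
    ((commute_ι_mul_ι_ι _ _ _).mul_left (commute_ι_mul_ι_ι _ _ _)).mul_left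
      (commute_ι_mul_ι_ι _ _ _)
  have h3 : a7 3 * (a7 1 * a7 2) = a7 1 * a7 2 * a7 3 := (commute_ι_mul_ι_ι _ _ _).eq.symm
  rw [← h6.eq, mul_assoc (a7 0), h3]
  simp only [mul_assoc]

theorem a7_six_mul_da7_pow_three :
    a7 6 * da7 * da7 * da7 = (-6 : ℝ) • (a7 0 * a7 1 * a7 2 * a7 3 * a7 4 * a7 5 * a7 6) := by
  rw [mul_assoc, mul_assoc, ← pow_three, da7_pow_three, mul_neg, mul_smul_comm,
    a7_six_mul_pairs_eq_prod]
  module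

/-- `α7 ∧ (dα7)³` is a non-zero multiple of `α1∧α2∧α3∧α4∧α5∧α6∧α7`; in particular it is
non-zero and `α7` is a linear contact form. -/
theorem stmt13 :
    (∃ c : ℝ, c ≠ 0 ∧
      a7 6 * da7 * da7 * da7 = c • (a7 0 * a7 1 * a7 2 * a7 3 * a7 4 * a7 5 * a7 6)) ∧
    a7 6 * da7 * da7 * da7 ≠ 0 := by
  rw [a7_six_mul_da7_pow_three]
  exact ⟨⟨-6, by norm_num, rfl⟩, smul_ne_zero (by norm_num) a7_prod_ne_zero⟩
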